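/- For the 3-dimensional algebra U₁ˢ (type (2,1)) with only nonzero product e₁e₁ = e₁, the basis change E₁ᵗ = t·e₁ + e₂, E₂ᵗ = t²·e₁, F₁ᵗ = f₁ (t ≠ 0) produces structure constants converging as t → 0 to those of B₃ˢ: E₁E₁ = E₂ and all other products zero. -/

import Mathlib

open Filter

/-- The multiplication of the (2,1)-dimensional algebra U₁ˢ on ℂ³ with coordinates
(e₁, e₂; f₁) and only nonzero product e₁e₁ = e₁. -/
noncomputable def muU1 : ℂ × ℂ × ℂ → ℂ × ℂ × ℂ → ℂ × ℂ × ℂ :=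
  fun x y => (x.1 * y.1, 0, 0)

noncomputable def E1 (t : ℂ) : ℂ × ℂ × ℂ := (t, 1, 0)    -- E₁ᵗ = t·e₁ + e₂
noncomputable def E2 (t : ℂ) : ℂ × ℂ × ℂ := (t ^ 2, 0, 0) -- E₂ᵗ = t²·e₁
noncomputable def F1 : ℂ × ℂ × ℂ := (0, 0, 1)            -- F₁ = f₁

lemma muU1_eq_zero_of_fst_eq_zero_left {x : ℂ × ℂ × ℂ} (hx : x.1 = 0) (y : ℂ × ℂ × ℂ) :
    muU1 x y = 0 := by
  simp [muU1, hx, Prod.zero_eq_mk]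

lemma muU1_eq_zero_of_fst_eq_zero_right (x : ℂ × ℂ × ℂ) {y : ℂ × ℂ × ℂ} (hy : y.1 = 0) :
    muU1 x y = 0 := by
  simp [muU1, hy, Prod.zero_eq_mk]

lemma muU1_E1_E1 (t : ℂ) : muU1 (E1 t) (E1 t) = E2 t := by
  simp [muU1, E1, E2, sq]

lemma muU1_E1_E2 (t : ℂ) : muU1 (E1 t) (E2 t) = t • E2 t := by
  simp [muU1, E1, E2]

lemma muU1_E2_E1 (t : ℂ) : muU1 (E2 t) (E1 t) = t • E2 t := by
  simp [muU1, E1, E2, mul_comm]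

lemma muU1_E2_E2 (t : ℂ) : muU1 (E2 t) (E2 t) = t ^ 2 • E2 t := by
  simp [muU1, E2]

lemma tendsto_pow_nhdsNE_zero {M : Type*} [MonoidWithZero M] [TopologicalSpace M]
    [ContinuousMul M] {n : ℕ} (hn : n ≠ 0) :
    Tendsto (fun t : M => t ^ n) (nhdsWithin 0 {0}ᶜ) (nhds 0) := by
  simpa [zero_pow hn] using ((continuous_pow n).tendsto (0 : M)).mono_left nhdsWithin_le_nhds

/-- The basis change E₁ᵗ = t·e₁+e₂, E₂ᵗ = t²·e₁, F₁ᵗ = f₁ of U₁ˢ produces structure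
constants converging as t → 0 to those of B₃ˢ: E₁E₁ = E₂ and all other products zero. -/
theorem degeneration_U1s_to_B3s :
    (∀ t : ℂ, t ≠ 0 →
      muU1 (E1 t) (E1 t) = E2 t ∧
      muU1 (E1 t) (E2 t) = t • E2 t ∧ muU1 (E2 t) (E1 t) = t • E2 t ∧
      muU1 (E2 t) (E2 t) = (t ^ 2) • E2 t ∧
      muU1 (E1 t) F1 = 0 ∧ muU1 F1 (E1 t) = 0 ∧
      muU1 (E2 t) F1 = 0 ∧ muU1 F1 (E2 t) = 0 ∧ muU1 F1 F1 = 0) ∧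
    Tendsto (fun t : ℂ => t) (nhdsWithin 0 {(0 : ℂ)}ᶜ) (nhds 0) ∧
    Tendsto (fun t : ℂ => t ^ 2) (nhdsWithin 0 {(0 : ℂ)}ᶜ) (nhds 0) := by
  have hF1 : F1.1 = 0 := rfl
  refine ⟨fun t _ => ⟨muU1_E1_E1 t, muU1_E1_E2 t, muU1_E2_E1 t, muU1_E2_E2 t,
      muU1_eq_zero_of_fst_eq_zero_right _ hF1, muU1_eq_zero_of_fst_eq_zero_left hF1 _,
      muU1_eq_zero_of_fst_eq_zero_right _ hF1, muU1_eq_zero_of_fst_eq_zero_left hF1 _,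
      muU1_eq_zero_of_fst_eq_zero_left hF1 _⟩, ?_, tendsto_pow_nhdsNE_zero two_ne_zero⟩
  simpa using tendsto_pow_nhdsNE_zero (M := ℂ) one_ne_zero
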